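/- Let ε ∈ [0,1) and let 𝓟 and 𝓔 be nonempty sets of density matrices on ℂ^d. Define α* as the infimum, over all tests E (Hermitian with 0 ≤ E ≤ I) satisfying sup_{ρ∈𝓟} tr[(I−E)ρ] ≤ ε, of sup_{τ∈𝓔} tr[Eτ]. Say that M > 1 is achievable if there exists a CPTP map F from d×d complex matrices to 2×2 complex matrices with T(F(ρ), |1⟩⟨1|) ≤ ε for all ρ ∈ 𝓟 and such that for every τ ∈ 𝓔 there exists M_τ ∈ [M,∞) with F(τ) = π_{M_τ}. Then: (a) every achievable M satisfies M ≤ 1/α* (in particular, if α* = 0 every M is permitted); and (b) every M with 1 < M < 1/α* is achievable. -/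

import Mathlib

open Matrix ComplexOrder

/-- Trace norm of a complex matrix: the trace of `sqrt(AᴴA)` (sum of singular values). -/
noncomputable def traceNorm {n : Type*} [Fintype n] [DecidableEq n]
    (A : Matrix n n ℂ) : ℝ :=
  (((Matrix.posSemidef_conjTranspose_mul_self A).1.eigenvectorUnitary.1 *
      Matrix.diagonal ((fun x : ℝ => (x : ℂ)) ∘ (Real.sqrt ·) ∘ (Matrix.posSemidef_conjTranspose_mul_self A).1.eigenvalues) *
      (star (Matrix.posSemidef_conjTranspose_mul_self A).1.eigenvectorUnitary : Matrix n n ℂ)).trace).re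

/-- Trace distance `T(X,Y) = ‖X - Y‖₁ / 2`. -/
noncomputable def traceDist {n : Type*} [Fintype n] [DecidableEq n]
    (X Y : Matrix n n ℂ) : ℝ :=
  traceNorm (X - Y) / 2

/-- A density matrix: positive semidefinite with unit trace. -/
def IsDensityMatrix {n : Type*} [Fintype n] (ρ : Matrix n n ℂ) : Prop :=
  ρ.PosSemidef ∧ ρ.trace = 1

/-- The battery Gibbs state `π_M = diag(1 - 1/M, 1/M)`. -/
noncomputable def piM (M : ℝ) : Matrix (Fin 2) (Fin 2) ℂ :=
  Matrix.diagonal ![((1 - 1/M : ℝ) : ℂ), ((1/M : ℝ) : ℂ)]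

/-- The excited battery state `|1⟩⟨1| = diag(0,1)`. -/
def ket1 : Matrix (Fin 2) (Fin 2) ℂ :=
  Matrix.diagonal ![0, 1]

/-- A test (POVM effect): `0 ≤ E ≤ I`. -/
def IsTest {n : Type*} [Fintype n] [DecidableEq n] (E : Matrix n n ℂ) : Prop :=
  E.PosSemidef ∧ (1 - E).PosSemidef

/-- Choi matrix `Σ_{ij} E_{ij} ⊗ F(E_{ij})` of a linear map on matrices. -/
noncomputable def choiMatrix {n m : Type*} [Fintype n] [DecidableEq n] [Fintype m]
    (F : Matrix n n ℂ →ₗ[ℂ] Matrix m m ℂ) :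
    Matrix (n × m) (n × m) ℂ :=
  fun p q => F (Matrix.single p.1 q.1 1) p.2 q.2

/-- Completely positive (positive semidefinite Choi matrix) and trace preserving. -/
def IsCPTP {n m : Type*} [Fintype n] [DecidableEq n] [Fintype m]
    (F : Matrix n n ℂ →ₗ[ℂ] Matrix m m ℂ) : Prop :=
  (choiMatrix F).PosSemidef ∧ ∀ X, (F X).trace = X.trace

/-- `n`-fold Kronecker (tensor) power of a `2 × 2` matrix, indexed by bit strings. -/
def tensPow (A : Matrix (Fin 2) (Fin 2) ℂ) (n : ℕ) :
    Matrix (Fin n → Fin 2) (Fin n → Fin 2) ℂ :=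
  fun x y => ∏ i, A (x i) (y i)

/-- `ε`-ball (in trace distance) of density matrices around a set `𝓟`. -/
noncomputable def metBall {n : Type*} [Fintype n] [DecidableEq n]
    (ε : ℝ) (P : Set (Matrix n n ℂ)) : Set (Matrix n n ℂ) :=
  {ω | IsDensityMatrix ω ∧ ∃ ρ ∈ P, traceDist ω ρ ≤ ε}

/-- `M` is an achievable dirty-battery work-extraction capacity from `(𝓟, 𝓔)`
with error `ε` under CPTP maps. -/
def AchievableDirty {d : ℕ} (ε M : ℝ) (𝓟 𝓔 : Set (Matrix (Fin d) (Fin d) ℂ)) : Prop :=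
  ∃ F : Matrix (Fin d) (Fin d) ℂ →ₗ[ℂ] Matrix (Fin 2) (Fin 2) ℂ,
    IsCPTP F ∧ (∀ ρ ∈ 𝓟, traceDist (F ρ) ket1 ≤ ε) ∧
    ∀ τ ∈ 𝓔, ∃ Mτ : ℝ, M ≤ Mτ ∧ F τ = piM Mτ

/-!
Read in the Heisenberg picture, a CPTP map `F` into a qubit is a test: the transposed block
`E = (choiBlock F 1 1)ᵀ` of its Choi matrix is `F†(|1⟩⟨1|)`, so `tr[Eρ] = F(ρ)₁₁` and
`tr[(I - E)ρ] = F(ρ)₀₀`. The distance from a qubit state `σ` to `|1⟩⟨1|` is at least `σ₀₀`, so the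
error condition on `𝓟` bounds the type-I error of `E` by `ε`, while `F(τ) = π_{M_τ}` gives
`tr[Eτ] = 1/M_τ ≤ 1/M`; hence `α* ≤ 1/M`.

Conversely, if a test `E` with type-I error at most `ε` has type-II error `a < 1/M`, then
`E + (1/M - a)(I - E)` still has type-I error at most `ε` and accepts every `τ ∈ 𝓔` with
probability in `(0, 1/M]`. The measure-and-prepare channel `X ↦ diag(tr[(I - E)X], tr[EX])`
then sends `τ` to `π_{1/tr[Eτ]}` and `ρ ∈ 𝓟` to a diagonal state at distance
`tr[(I - E)ρ] ≤ ε` from `|1⟩⟨1|`.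
-/

namespace Matrix.PosSemidef

variable {n : Type*} [Fintype n]

open scoped MatrixOrder in
lemma trace_mul_nonneg {𝕜 : Type*} [RCLike 𝕜] {A B : Matrix n n 𝕜}
    (hA : A.PosSemidef) (hB : B.PosSemidef) : 0 ≤ (A * B).trace := by
  classical
  obtain ⟨C, rfl⟩ := CStarAlgebra.nonneg_iff_eq_star_mul_self.mp hA.nonneg
  rw [Matrix.mul_assoc, trace_mul_comm]
  simpa [Matrix.mul_assoc, star_eq_conjTranspose] using
    (hB.mul_mul_conjTranspose_same C).trace_nonneg

lemma re_trace_mul_nonneg {A B : Matrix n n ℂ} (hA : A.PosSemidef) (hB : B.PosSemidef) :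
    0 ≤ (A * B).trace.re :=
  (Complex.nonneg_iff.mp (hA.trace_mul_nonneg hB)).1

lemma trace_mul_eq_re {A B : Matrix n n ℂ} (hA : A.PosSemidef) (hB : B.PosSemidef) :
    (A * B).trace = ((A * B).trace.re : ℂ) :=
  Complex.eq_re_of_ofReal_le (by rw [Complex.ofReal_zero]; exact hA.trace_mul_nonneg hB)

end Matrix.PosSemidef

section TraceNorm

variable {n : Type*} [Fintype n] [DecidableEq n]

lemma traceNorm_eq_sum_sqrt_eigenvalues (A : Matrix n n ℂ) :
    traceNorm A = ∑ i, √((posSemidef_conjTranspose_mul_self A).1.eigenvalues i) := by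
  rw [traceNorm, trace_mul_cycle, Unitary.coe_star_mul_self, Matrix.one_mul, trace_diagonal]
  simp [← Complex.ofReal_sum]

lemma traceNorm_eq_of_conjTranspose_mul_self_eq {A : Matrix n n ℂ} {r : ℝ} (hr : 0 ≤ r)
    (h : Aᴴ * A = (r ^ 2 : ℝ) • 1) : traceNorm A = Fintype.card n * r := by
  have heig (i : n) : (posSemidef_conjTranspose_mul_self A).1.eigenvalues i = r ^ 2 := by
    have : Nonempty n := ⟨i⟩
    have hmem := (posSemidef_conjTranspose_mul_self A).1.eigenvalues_mem_spectrum_real i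
    have hspec : spectrum ℝ (Aᴴ * A) = {r ^ 2} := by
      rw [h, ← Algebra.algebraMap_eq_smul_one, spectrum.scalar_eq]
    rwa [hspec] at hmem
  simp [traceNorm_eq_sum_sqrt_eigenvalues, heig, Real.sqrt_sq hr]

lemma traceDist_ket1 {σ : Matrix (Fin 2) (Fin 2) ℂ} (hσ : σ.IsHermitian) (htr : σ.trace = 1) :
    traceDist σ ket1 = √((σ 0 0).re ^ 2 + Complex.normSq (σ 0 1)) := by
  set r := (σ 0 0).re
  have h00 : σ 0 0 = r := (hσ.coe_re_apply_self 0).symm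
  have h11 : σ 1 1 = 1 - r := by rw [← htr, trace_fin_two, h00]; ring
  have h10 : σ 1 0 = star (σ 0 1) := (hσ.apply 1 0).symm
  have hsq : (σ - ket1)ᴴ * (σ - ket1) = (√(r ^ 2 + Complex.normSq (σ 0 1)) ^ 2 : ℝ) • 1 := by
    rw [Real.sq_sqrt (add_nonneg (sq_nonneg r) (Complex.normSq_nonneg _))]
    ext i j
    fin_cases i <;> fin_cases j <;>
      simp [Matrix.mul_apply, ket1, h00, h10, h11, Complex.ext_iff, Complex.normSq_apply,
        -Complex.ofReal_pow] <;>
      constructor <;> ring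
  rw [traceDist, traceNorm_eq_of_conjTranspose_mul_self_eq (Real.sqrt_nonneg _) hsq]
  simp

end TraceNorm

section Choi

variable {n m : Type*} [Fintype n] [DecidableEq n] [Fintype m]

noncomputable def choiBlock (F : Matrix n n ℂ →ₗ[ℂ] Matrix m m ℂ) (k l : m) : Matrix n n ℂ :=
  (choiMatrix F).submatrix (·, k) (·, l)

lemma apply_eq_trace_choiBlock_mul (F : Matrix n n ℂ →ₗ[ℂ] Matrix m m ℂ) (X : Matrix n n ℂ)
    (k l : m) : F X k l = ((choiBlock F k l)ᵀ * X).trace := by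
  conv_lhs => rw [matrix_eq_sum_single X]
  have hsingle (i j : n) : single i j (X i j) = X i j • single i j 1 := by
    rw [smul_single, smul_eq_mul, mul_one]
  simp only [hsingle, map_sum, map_smul, Matrix.sum_apply, Matrix.smul_apply, smul_eq_mul]
  rw [Finset.sum_comm]
  simp [trace, mul_apply, choiBlock, choiMatrix, mul_comm]

lemma conjTranspose_choiBlock {F : Matrix n n ℂ →ₗ[ℂ] Matrix m m ℂ}
    (hF : (choiMatrix F).IsHermitian) (k l : m) : (choiBlock F k l)ᴴ = choiBlock F l k := by
  ext i j
  exact hF.apply (i, l) (j, k)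

lemma Matrix.IsHermitian.map_of_isHermitian_choiMatrix {F : Matrix n n ℂ →ₗ[ℂ] Matrix m m ℂ}
    {X : Matrix n n ℂ} (hX : X.IsHermitian) (hF : (choiMatrix F).IsHermitian) :
    (F X).IsHermitian := by
  ext k l
  rw [conjTranspose_apply, apply_eq_trace_choiBlock_mul, apply_eq_trace_choiBlock_mul,
    ← trace_conjTranspose, conjTranspose_mul, hX.eq,
    conjTranspose_transpose_eq_transpose_conjTranspose, conjTranspose_choiBlock hF, trace_mul_comm]

lemma sum_choiBlock_self {F : Matrix n n ℂ →ₗ[ℂ] Matrix m m ℂ}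
    (hF : ∀ X, (F X).trace = X.trace) : ∑ k, choiBlock F k k = 1 := by
  ext i j
  have := hF (single i j 1)
  by_cases hij : i = j
  · subst hij; simpa [choiBlock, choiMatrix, Matrix.sum_apply, trace] using this
  · simpa [choiBlock, choiMatrix, Matrix.sum_apply, trace, hij] using this

end Choi

lemma trace_one_sub_mul_of_trace_eq_one {n : Type*} [Fintype n] [DecidableEq n]
    (E : Matrix n n ℂ) {τ : Matrix n n ℂ} (hτ : τ.trace = 1) :
    ((1 - E) * τ).trace = 1 - (E * τ).trace := by
  rw [Matrix.sub_mul, trace_sub, Matrix.one_mul, hτ]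

lemma one_sub_add_smul_one_sub {A : Type*} [Ring A] [Module ℝ A] (x : A) (c : ℝ) :
    1 - (x + c • (1 - x)) = (1 - c) • (1 - x) := by
  module

section Tests

variable {n : Type*} [Fintype n] [DecidableEq n]

lemma IsTest.re_trace_mul_le_one {E τ : Matrix n n ℂ} (hE : IsTest E) (hτ : IsDensityMatrix τ) :
    (E * τ).trace.re ≤ 1 := by
  have := hE.2.re_trace_mul_nonneg hτ.1
  rw [trace_one_sub_mul_of_trace_eq_one E hτ.2, Complex.sub_re, Complex.one_re] at this
  linarith

lemma IsTest.add_smul_one_sub {E : Matrix n n ℂ} (hE : IsTest E) {c : ℝ} (hc₀ : 0 ≤ c)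
    (hc₁ : c ≤ 1) : IsTest (E + c • (1 - E)) := by
  refine ⟨hE.1.add (hE.2.smul hc₀), ?_⟩
  rw [one_sub_add_smul_one_sub]
  exact hE.2.smul (sub_nonneg.mpr hc₁)

lemma one_sub_transpose_choiBlock_one {F : Matrix n n ℂ →ₗ[ℂ] Matrix (Fin 2) (Fin 2) ℂ}
    (hF : ∀ X, (F X).trace = X.trace) : 1 - (choiBlock F 1 1)ᵀ = (choiBlock F 0 0)ᵀ := by
  have := sum_choiBlock_self hF
  rw [Fin.sum_univ_two] at this
  rw [← transpose_one, ← this, transpose_add]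
  abel

lemma IsCPTP.isTest_transpose_choiBlock_one {F : Matrix n n ℂ →ₗ[ℂ] Matrix (Fin 2) (Fin 2) ℂ}
    (hF : IsCPTP F) : IsTest (choiBlock F 1 1)ᵀ :=
  ⟨(hF.1.submatrix (·, 1)).transpose,
    one_sub_transpose_choiBlock_one hF.2 ▸ (hF.1.submatrix (·, 0)).transpose⟩

end Tests

lemma AchievableDirty.exists_isTest {d : ℕ} {ε M : ℝ} {𝓟 𝓔 : Set (Matrix (Fin d) (Fin d) ℂ)}
    (h : AchievableDirty ε M 𝓟 𝓔) (hM : 0 < M) (h𝓟 : ∀ ρ ∈ 𝓟, IsDensityMatrix ρ) :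
    ∃ E, IsTest E ∧ (∀ ρ ∈ 𝓟, ((1 - E) * ρ).trace.re ≤ ε) ∧
      ∀ τ ∈ 𝓔, (E * τ).trace.re ≤ 1 / M := by
  obtain ⟨F, hF, hF𝓟, hF𝓔⟩ := h
  refine ⟨_, hF.isTest_transpose_choiBlock_one, fun ρ hρ => ?_, fun τ hτ => ?_⟩
  · have hσ : (F ρ).IsHermitian := (h𝓟 ρ hρ).1.1.map_of_isHermitian_choiMatrix hF.1.1
    have htr : (F ρ).trace = 1 := by rw [hF.2, (h𝓟 ρ hρ).2]
    calc ((1 - (choiBlock F 1 1)ᵀ) * ρ).trace.re = (F ρ 0 0).re := by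
          rw [one_sub_transpose_choiBlock_one hF.2, ← apply_eq_trace_choiBlock_mul]
      _ ≤ traceDist (F ρ) ket1 := by
          rw [traceDist_ket1 hσ htr]
          exact Real.le_sqrt_of_sq_le (le_add_of_nonneg_right (Complex.normSq_nonneg _))
      _ ≤ ε := hF𝓟 ρ hρ
  · obtain ⟨Mτ, hMτ, hFτ⟩ := hF𝓔 τ hτ
    rw [← apply_eq_trace_choiBlock_mul, hFτ]
    simpa [piM] using one_div_le_one_div_of_le hM hMτ

section MeasurePrepare

variable {n : Type*} [Fintype n] [DecidableEq n]

open scoped Kronecker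

noncomputable def measurePrepare (E : Matrix n n ℂ) :
    Matrix n n ℂ →ₗ[ℂ] Matrix (Fin 2) (Fin 2) ℂ where
  toFun X := diagonal ![((1 - E) * X).trace, (E * X).trace]
  map_add' X Y := by
    ext i j
    fin_cases i <;> fin_cases j <;> simp [Matrix.mul_add]
  map_smul' c X := by
    ext i j
    fin_cases i <;> fin_cases j <;> simp

@[simp]
lemma measurePrepare_apply (E X : Matrix n n ℂ) :
    measurePrepare E X = diagonal ![((1 - E) * X).trace, (E * X).trace] := rfl

lemma choiMatrix_measurePrepare (E : Matrix n n ℂ) :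
    choiMatrix (measurePrepare E) =
      (1 - E)ᵀ ⊗ₖ diagonal ![1, 0] + Eᵀ ⊗ₖ diagonal ![0, 1] := by
  ext ⟨i, k⟩ ⟨j, l⟩
  fin_cases k <;> fin_cases l <;> simp [choiMatrix, trace_mul_single, one_apply, eq_comm]

lemma IsTest.isCPTP_measurePrepare {E : Matrix n n ℂ} (hE : IsTest E) :
    IsCPTP (measurePrepare E) := by
  refine ⟨?_, fun X => ?_⟩
  · rw [choiMatrix_measurePrepare]
    exact (hE.2.transpose.kronecker (.diagonal fun i => by fin_cases i <;> simp)).add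
      (hE.1.transpose.kronecker (.diagonal fun i => by fin_cases i <;> simp))
  · simp [← trace_add, ← Matrix.add_mul]

end MeasurePrepare

section Achievability

variable {d : ℕ} {ε M : ℝ} {𝓟 𝓔 : Set (Matrix (Fin d) (Fin d) ℂ)} {E : Matrix (Fin d) (Fin d) ℂ}

lemma achievableDirty_of_isTest (hE : IsTest E) (h𝓟 : ∀ ρ ∈ 𝓟, IsDensityMatrix ρ)
    (h𝓔 : ∀ τ ∈ 𝓔, IsDensityMatrix τ) (hE𝓟 : ∀ ρ ∈ 𝓟, ((1 - E) * ρ).trace.re ≤ ε)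
    (hE𝓔 : ∀ τ ∈ 𝓔, 0 < (E * τ).trace.re ∧ (E * τ).trace.re ≤ 1 / M) :
    AchievableDirty ε M 𝓟 𝓔 := by
  have hF := hE.isCPTP_measurePrepare
  refine ⟨measurePrepare E, hF, fun ρ hρ => ?_, fun τ hτ => ?_⟩
  · have hσ := (h𝓟 ρ hρ).1.1.map_of_isHermitian_choiMatrix hF.1.1
    have htr : (measurePrepare E ρ).trace = 1 := by rw [hF.2, (h𝓟 ρ hρ).2]
    rw [traceDist_ket1 hσ htr]
    simpa [Real.sqrt_sq (hE.2.re_trace_mul_nonneg (h𝓟 ρ hρ).1)] using hE𝓟 ρ hρ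
  · obtain ⟨ht₀, htM⟩ := hE𝓔 τ hτ
    have hM : 0 < M := one_div_pos.mp (ht₀.trans_le htM)
    refine ⟨1 / (E * τ).trace.re, (le_one_div hM ht₀).mpr htM, ?_⟩
    rw [measurePrepare_apply, trace_one_sub_mul_of_trace_eq_one E (h𝓔 τ hτ).2,
      hE.1.trace_mul_eq_re (h𝓔 τ hτ).1, piM, one_div_one_div]
    simp

lemma achievableDirty_of_isTest_of_lt {a : ℝ} (hM : 1 < M) (ha : 0 ≤ a) (haM : a < 1 / M)
    (hE : IsTest E) (h𝓟 : ∀ ρ ∈ 𝓟, IsDensityMatrix ρ) (h𝓔 : ∀ τ ∈ 𝓔, IsDensityMatrix τ)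
    (hE𝓟 : ∀ ρ ∈ 𝓟, ((1 - E) * ρ).trace.re ≤ ε) (hE𝓔 : ∀ τ ∈ 𝓔, (E * τ).trace.re ≤ a) :
    AchievableDirty ε M 𝓟 𝓔 := by
  set c := 1 / M - a
  have hc₀ : 0 < c := sub_pos.mpr haM
  have hc₁ : c ≤ 1 := by linarith [(div_lt_one (by linarith)).mpr hM]
  refine achievableDirty_of_isTest (hE.add_smul_one_sub hc₀.le hc₁) h𝓟 h𝓔
    (fun ρ hρ => ?_) (fun τ hτ => ?_)
  · have h₀ := hE.2.re_trace_mul_nonneg (h𝓟 ρ hρ).1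
    rw [one_sub_add_smul_one_sub, smul_mul, trace_smul, Complex.smul_re, smul_eq_mul]
    nlinarith [hE𝓟 ρ hρ]
  · have h₀ := hE.1.re_trace_mul_nonneg (h𝓔 τ hτ).1
    have h₁ := hE.re_trace_mul_le_one (h𝓔 τ hτ)
    rw [Matrix.add_mul, trace_add, smul_mul, trace_smul, Complex.add_re, Complex.smul_re,
      smul_eq_mul, trace_one_sub_mul_of_trace_eq_one E (h𝓔 τ hτ).2, Complex.sub_re,
      Complex.one_re]
    constructor <;> nlinarith [hE𝓔 τ hτ]

end Achievability

noncomputable def minTypeIIError {n : Type*} [Fintype n] [DecidableEq n] (ε : ℝ)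
    (𝓟 𝓔 : Set (Matrix n n ℂ)) : ℝ :=
  sInf {a : ℝ | ∃ E : Matrix n n ℂ, IsTest E ∧ (∀ ρ ∈ 𝓟, ((1 - E) * ρ).trace.re ≤ ε) ∧
    a = sSup {r : ℝ | ∃ τ ∈ 𝓔, r = (E * τ).trace.re}}

section MinTypeIIError

variable {n : Type*} [Fintype n] [DecidableEq n] {ε : ℝ} {𝓟 𝓔 : Set (Matrix n n ℂ)}

lemma minTypeIIError_le {E : Matrix n n ℂ} (hE : IsTest E)
    (hE𝓟 : ∀ ρ ∈ 𝓟, ((1 - E) * ρ).trace.re ≤ ε) (h𝓔 : ∀ τ ∈ 𝓔, τ.PosSemidef) {x : ℝ}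
    (hx : 0 ≤ x) (hE𝓔 : ∀ τ ∈ 𝓔, (E * τ).trace.re ≤ x) : minTypeIIError ε 𝓟 𝓔 ≤ x := by
  refine le_trans (csInf_le ⟨0, ?_⟩ ⟨E, hE, hE𝓟, rfl⟩) (Real.sSup_le ?_ hx)
  · rintro _ ⟨E', hE', -, rfl⟩
    exact Real.sSup_nonneg (by rintro _ ⟨τ, hτ, rfl⟩; exact hE'.1.re_trace_mul_nonneg (h𝓔 τ hτ))
  · rintro _ ⟨τ, hτ, rfl⟩
    exact hE𝓔 τ hτ

lemma exists_isTest_of_minTypeIIError_lt (hε : 0 ≤ ε) (h𝓔 : ∀ τ ∈ 𝓔, IsDensityMatrix τ)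
    {x : ℝ} (h : minTypeIIError ε 𝓟 𝓔 < x) :
    ∃ E a, IsTest E ∧ (∀ ρ ∈ 𝓟, ((1 - E) * ρ).trace.re ≤ ε) ∧ 0 ≤ a ∧ a < x ∧
      ∀ τ ∈ 𝓔, (E * τ).trace.re ≤ a := by
  have hone : IsTest (1 : Matrix n n ℂ) := ⟨.one, by rw [sub_self]; exact .zero⟩
  obtain ⟨_, ⟨E, hE, hE𝓟, rfl⟩, hlt⟩ :=
    exists_lt_of_csInf_lt (by exact ⟨_, 1, hone, fun ρ _ => by simpa using hε, rfl⟩) h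
  refine ⟨E, _, hE, hE𝓟, ?_, hlt, fun τ hτ => le_csSup ?_ ⟨τ, hτ, rfl⟩⟩
  · exact Real.sSup_nonneg (by rintro _ ⟨τ, hτ, rfl⟩; exact hE.1.re_trace_mul_nonneg (h𝓔 τ hτ).1)
  · exact ⟨1, by rintro _ ⟨τ, hτ, rfl⟩; exact hE.re_trace_mul_le_one (h𝓔 τ hτ)⟩

end MinTypeIIError

theorem stmt_8_general {d : ℕ} (ε : ℝ) (hε : ε ∈ Set.Ico (0:ℝ) 1)
    (𝓟 𝓔 : Set (Matrix (Fin d) (Fin d) ℂ))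
    (h𝓟 : ∀ ρ ∈ 𝓟, IsDensityMatrix ρ) (h𝓔 : ∀ τ ∈ 𝓔, IsDensityMatrix τ)
    (αstar : ℝ)
    (hα : αstar = sInf {a : ℝ | ∃ E : Matrix (Fin d) (Fin d) ℂ, IsTest E ∧
        (∀ ρ ∈ 𝓟, ((1 - E) * ρ).trace.re ≤ ε) ∧
        a = sSup {r : ℝ | ∃ τ ∈ 𝓔, r = (E * τ).trace.re}}) :
    (∀ M : ℝ, 1 < M → AchievableDirty ε M 𝓟 𝓔 → M * αstar ≤ 1) ∧
    (∀ M : ℝ, 1 < M → M * αstar < 1 → AchievableDirty ε M 𝓟 𝓔) := by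
  replace hα : αstar = minTypeIIError ε 𝓟 𝓔 := hα
  refine ⟨fun M hM hach => ?_, fun M hM hlt => ?_⟩
  · obtain ⟨E, hE, hE𝓟, hE𝓔⟩ := hach.exists_isTest (by linarith) h𝓟
    have hαM : αstar ≤ 1 / M :=
      hα ▸ minTypeIIError_le hE hE𝓟 (fun τ hτ => (h𝓔 τ hτ).1) (by positivity) hE𝓔
    calc M * αstar ≤ M * (1 / M) := by gcongr
      _ = 1 := by field_simp
  · have hαM : αstar < 1 / M := by rw [lt_div_iff₀ (by linarith), mul_comm]; exact hlt
    obtain ⟨E, a, hE, hE𝓟, ha, haM, hE𝓔⟩ :=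
      exists_isTest_of_minTypeIIError_lt hε.1 h𝓔 (hα ▸ hαM)
    exact achievableDirty_of_isTest_of_lt hM ha haM hE h𝓟 h𝓔 hE𝓟 hE𝓔

/-- one-shot work extraction into a dirty battery under GPO is
characterized by the smoothed min-relative entropy (hypothesis testing) value
`α*`: (a) every achievable `M` satisfies `M ≤ 1/α*` (with `1/0 = ∞`, phrased
multiplicatively), and (b) every `1 < M < 1/α*` is achievable. -/
theorem stmt_8 {d : ℕ} (ε : ℝ) (hε : ε ∈ Set.Ico (0:ℝ) 1)
    (𝓟 𝓔 : Set (Matrix (Fin d) (Fin d) ℂ))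
    (h𝓟ne : 𝓟.Nonempty) (h𝓔ne : 𝓔.Nonempty)
    (h𝓟 : ∀ ρ ∈ 𝓟, IsDensityMatrix ρ) (h𝓔 : ∀ τ ∈ 𝓔, IsDensityMatrix τ)
    (αstar : ℝ)
    (hα : αstar = sInf {a : ℝ | ∃ E : Matrix (Fin d) (Fin d) ℂ, IsTest E ∧
        (∀ ρ ∈ 𝓟, ((1 - E) * ρ).trace.re ≤ ε) ∧
        a = sSup {r : ℝ | ∃ τ ∈ 𝓔, r = (E * τ).trace.re}}) :
    (∀ M : ℝ, 1 < M → AchievableDirty ε M 𝓟 𝓔 → M * αstar ≤ 1) ∧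
    (∀ M : ℝ, 1 < M → M * αstar < 1 → AchievableDirty ε M 𝓟 𝓔) :=
  stmt_8_general ε hε 𝓟 𝓔 h𝓟 h𝓔 αstar hα
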